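/- Bracket-reduction lemma for L◇: suppose Γ[⟨Δ⟩] ⇒ A_{n+1} is provable in L◇, the yield of Γ[⟨Δ⟩] is A_1 ⋯ A_n, all A_i are types over a set B of primitive types, and ||A_i|| ≤ m for i = 1, ..., n+1. Then there exists a type D over B with ||D|| ≤ m − 2 such that either (i) Δ ⇒ D and Γ[◇D] ⇒ A_{n+1} are both provable in L◇, or (ii) Δ ⇒ □↓D and Γ[D] ⇒ A_{n+1} are both provable in L◇. -/
import Mathlib


/-- Types of the bracketed Lambek calculus. -/
inductive PTy where
  | prim : ℕ → PTy
  | ldiv : PTy → PTy → PTy   -- ldiv A B = A \ B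
  | rdiv : PTy → PTy → PTy   -- rdiv B A = B / A
  | mul  : PTy → PTy → PTy
  | dia  : PTy → PTy
  | box  : PTy → PTy
deriving DecidableEq

/-- Type trees: leaves labeled by types, internal nodes are brackets. -/
inductive PTree where
  | leaf : PTy → PTree
  | node : List PTree → PTree

abbrev PHedge := List PTree

/-- Contexts: a hedge with one distinguished hole. -/
inductive PCtx where
  | hole : PHedge → PHedge → PCtx
  | brk  : PCtx → PHedge → PHedge → PCtx

/-- Substitution of a hedge for the hole of a context. -/
def PCtx.plug : PCtx → PHedge → PHedge
  | .hole pre post, D => pre ++ D ++ post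
  | .brk c pre post, D => pre ++ (PTree.node (c.plug D) :: post)

/-- All primitive types occurring in the type belong to `B`. -/
def PTy.over (B : Finset ℕ) : PTy → Prop
  | .prim p => p ∈ B
  | .ldiv A C => A.over B ∧ C.over B
  | .rdiv C A => C.over B ∧ A.over B
  | .mul A C => A.over B ∧ C.over B
  | .dia A => A.over B
  | .box A => A.over B

/-- Length of a type. -/
def lenP : PTy → ℕ
  | .prim _ => 1
  | .ldiv A B => lenP A + lenP B
  | .rdiv B A => lenP B + lenP A
  | .mul A B => lenP A + lenP B
  | .dia A => lenP A + 2
  | .box A => lenP A + 2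

mutual
/-- The yield of a tree: the sequence of types labeling its leaves. -/
def yieldTree : PTree → List PTy
  | .leaf A => [A]
  | .node ts => yieldHedge ts
/-- The yield of a hedge. -/
def yieldHedge : List PTree → List PTy
  | [] => []
  | t :: ts => yieldTree t ++ yieldHedge ts
end
/-- L◇ : the Lambek calculus with brackets
(the antecedent must be nonempty in the right rules for the divisions). -/
inductive PProv : PHedge → PTy → Prop where
  | id (p) : PProv [.leaf (.prim p)] (.prim p)
  | ldivL (G : PHedge) (D : PCtx) (A B C) :
      PProv G A → PProv (D.plug [.leaf B]) C →
      PProv (D.plug (G ++ [.leaf (.ldiv A B)])) C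
  | ldivR (Pi : PHedge) (A B) : Pi ≠ [] →
      PProv (.leaf A :: Pi) B → PProv Pi (.ldiv A B)
  | rdivL (G : PHedge) (D : PCtx) (A B C) :
      PProv G A → PProv (D.plug [.leaf B]) C →
      PProv (D.plug (.leaf (.rdiv B A) :: G)) C
  | rdivR (Pi : PHedge) (A B) : Pi ≠ [] →
      PProv (Pi ++ [.leaf A]) B → PProv Pi (.rdiv B A)
  | mulL (G : PCtx) (A B C) :
      PProv (G.plug [.leaf A, .leaf B]) C → PProv (G.plug [.leaf (.mul A B)]) C
  | mulR (G D : PHedge) (A B) :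
      PProv G A → PProv D B → PProv (G ++ D) (.mul A B)
  | diaL (G : PCtx) (A B) :
      PProv (G.plug [.node [.leaf A]]) B → PProv (G.plug [.leaf (.dia A)]) B
  | diaR (G : PHedge) (A) :
      PProv G A → PProv [.node G] (.dia A)
  | boxL (G : PCtx) (A B) :
      PProv (G.plug [.leaf A]) B → PProv (G.plug [.node [.leaf (.box A)]]) B
  | boxR (G : PHedge) (A) :
      PProv [.node G] A → PProv G (.box A)
  | cut (G : PHedge) (D : PCtx) (A B) :
      PProv G A → PProv (D.plug [.leaf A]) B → PProv (D.plug G) B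

namespace BR
open PTy PTree

theorem lenP_pos (A : PTy) : 1 ≤ lenP A := by
  induction A <;> simp [lenP] <;> omega

/-- Composition of contexts: `(pcomp C D).plug X = C.plug (D.plug X)`. -/
def pcomp : PCtx → PCtx → PCtx
  | .hole p q, .hole p' q' => .hole (p ++ p') (q' ++ q)
  | .hole p q, .brk c p' q' => .brk c (p ++ p') (q' ++ q)
  | .brk c p q, d => .brk (pcomp c d) p q

theorem plug_comp (C D : PCtx) (X : PHedge) :
    (pcomp C D).plug X = C.plug (D.plug X) := by
  induction C generalizing X with
  | hole p q => cases D <;> simp [pcomp, PCtx.plug]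
  | brk c p q ih => simp [pcomp, PCtx.plug, ih]

theorem pcomp_hole (C : PCtx) : pcomp C (.hole [] []) = C := by
  induction C with
  | hole p q => simp [pcomp]
  | brk c p q ih => simp [pcomp, ih]

theorem yieldHedge_append (a b : PHedge) :
    yieldHedge (a ++ b) = yieldHedge a ++ yieldHedge b := by
  induction a with
  | nil => simp [yieldHedge]
  | cons t ts ih => simp [yieldHedge, ih]

/-- yield of the part of a context before the hole -/
def ypre : PCtx → List PTy
  | .hole p _ => yieldHedge p
  | .brk c p _ => yieldHedge p ++ ypre c

def ypost : PCtx → List PTy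
  | .hole _ q => yieldHedge q
  | .brk c _ q => ypost c ++ yieldHedge q

theorem yield_plug (C : PCtx) (X : PHedge) :
    yieldHedge (C.plug X) = ypre C ++ yieldHedge X ++ ypost C := by
  induction C generalizing X with
  | hole p q => simp [PCtx.plug, ypre, ypost, yieldHedge_append]
  | brk c p q ih => simp [PCtx.plug, ypre, ypost, yieldHedge_append, yieldTree, yieldHedge, ih]

theorem plug_ne_nil (C : PCtx) (X : PHedge) (hX : X ≠ []) : C.plug X ≠ [] := by
  cases C with
  | hole p q => simp [PCtx.plug]; intro _ h _; exact hX h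
  | brk c p q => simp [PCtx.plug]

theorem plug_single_ne_nil (C : PCtx) (t : PTree) : C.plug [t] ≠ [] :=
  plug_ne_nil C [t] (by simp)

/-- Where can a single tree be plugged to produce a single tree? -/
theorem plug_single_eq_single (C : PCtx) (t s : PTree) (h : C.plug [t] = [s]) :
    (C = .hole [] [] ∧ t = s) ∨ (∃ c, C = .brk c [] [] ∧ s = .node (c.plug [t])) := by
  cases C with
  | hole p q =>
    left
    simp [PCtx.plug] at h
    rcases p with _ | ⟨x, p⟩
    · simp_all
    · simp at h
  | brk c p q =>
    right
    simp [PCtx.plug] at h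
    rcases p with _ | ⟨x, p⟩
    · simp at h
      exact ⟨c, by simp [h.2.symm], h.1.symm⟩
    · simp at h

end BR
namespace BR
open PTy PTree

/-- How an element-occurrence relates to a segment-occurrence in a list. -/
theorem three_split {α : Type} (a : List α) (t : α) :
    ∀ (b a' Y b' : List α), a ++ t :: b = a' ++ Y ++ b' →
    (∃ u k, a = a' ++ u ∧ Y = u ++ t :: k ∧ b = k ++ b') ∨
    (∃ u, a' = a ++ t :: u ∧ b = u ++ Y ++ b') ∨
    (∃ u, a = a' ++ Y ++ u ∧ b' = u ++ t :: b) := by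
  induction a with
  | nil =>
    intro b a' Y b' h
    cases a' with
    | cons x a'' =>
      simp at h
      right; left
      exact ⟨a'', by simp [h.1, h.2], by simp [h.2]⟩
    | nil =>
      cases Y with
      | nil =>
        right; right
        exact ⟨[], by simp, by simpa using h.symm⟩
      | cons y Y2 =>
        simp at h
        left
        exact ⟨[], Y2, by simp, by simp [h.1], h.2⟩
  | cons x a2 ih =>
    intro b a' Y b' h
    cases a' with
    | cons x' a2' =>
      simp at h
      obtain ⟨rfl, h2⟩ := h
      rcases ih b a2' Y b' (by simpa using h2) with ⟨u, k, h3, h4, h5⟩ | ⟨u, h3, h4⟩ | ⟨u, h3, h4⟩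
      · exact Or.inl ⟨u, k, by simp [h3], h4, h5⟩
      · exact Or.inr (Or.inl ⟨u, by simp [h3], h4⟩)
      · exact Or.inr (Or.inr ⟨u, by simp [h3], h4⟩)
    | nil =>
      cases Y with
      | nil =>
        right; right
        exact ⟨x :: a2, by simp, by simpa using h.symm⟩
      | cons y Y2 =>
        simp at h
        obtain ⟨rfl, h2⟩ := h
        rcases ih b [] Y2 b' (by simpa using h2) with ⟨u, k, h3, h4, h5⟩ | ⟨u, h3, h4⟩ | ⟨u, h3, h4⟩
        · simp at h3
          exact Or.inl ⟨x :: u, k, by simp [h3], by simp [h4], h5⟩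
        · simp at h3
        · simp at h3
          exact Or.inr (Or.inr ⟨u, by simp [h3], h4⟩)

end BR
namespace BR
open PTy PTree

theorem singleton_eq {α : Type} {u k : List α} {x y : α} (h : u ++ x :: k = [y]) :
    u = [] ∧ k = [] ∧ x = y := by
  cases u with
  | nil => simp at h; exact ⟨rfl, h.2, h.1⟩
  | cons a u => simp at h

/-- Overlap analysis: how can a single tree and a hedge be plugged into
two contexts giving the same hedge. -/
theorem overlap : ∀ (C D : PCtx) (t : PTree) (Y : PHedge), C.plug [t] = D.plug Y →
    (∃ E, C = pcomp D E ∧ E.plug [t] = Y) ∨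
    (∃ E, D = pcomp C E ∧ E.plug Y = [t]) ∨
    (∃ (Cf Df : PHedge → PCtx), (∀ Z W, (Cf W).plug Z = (Df Z).plug W) ∧ C = Cf Y ∧ D = Df [t]) := by
  intro C
  induction C with
  | hole a b =>
    intro D t Y h
    cases D with
    | hole a' b' =>
      simp only [PCtx.plug] at h
      rcases three_split a t b a' Y b' (by simpa using h) with
        ⟨u, k, rfl, rfl, rfl⟩ | ⟨u, rfl, rfl⟩ | ⟨u, rfl, rfl⟩
      · exact Or.inl ⟨.hole u k, by simp [pcomp], by simp [PCtx.plug]⟩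
      · refine Or.inr (Or.inr ⟨fun W => .hole a (u ++ W ++ b'), fun Z => .hole (a ++ Z ++ u) b',
          fun Z W => by simp [PCtx.plug], by simp, by simp⟩)
      · refine Or.inr (Or.inr ⟨fun W => .hole (a' ++ W ++ u) b, fun Z => .hole a' (u ++ Z ++ b),
          fun Z W => by simp [PCtx.plug], by simp, by simp⟩)
    | brk d a' b' =>
      simp only [PCtx.plug] at h
      rcases three_split a t b a' [.node (d.plug Y)] b' (by simpa using h) with
        ⟨u, k, rfl, hY, rfl⟩ | ⟨u, rfl, rfl⟩ | ⟨u, rfl, rfl⟩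
      · obtain ⟨rfl, rfl, rfl⟩ := singleton_eq hY.symm
        exact Or.inr (Or.inl ⟨.brk d [] [], by simp [pcomp], by simp [PCtx.plug]⟩)
      · refine Or.inr (Or.inr ⟨fun W => .hole a (u ++ .node (d.plug W) :: b'),
          fun Z => .brk d (a ++ Z ++ u) b',
          fun Z W => by simp [PCtx.plug], by simp, by simp⟩)
      · refine Or.inr (Or.inr ⟨fun W => .hole (a' ++ .node (d.plug W) :: u) b,
          fun Z => .brk d a' (u ++ Z ++ b),
          fun Z W => by simp [PCtx.plug], by simp, by simp⟩)
  | brk c a b ih =>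
    intro D t Y h
    cases D with
    | hole a' b' =>
      simp only [PCtx.plug] at h
      rcases three_split a (PTree.node (c.plug [t])) b a' Y b' (by simpa using h) with
        ⟨u, k, rfl, rfl, rfl⟩ | ⟨u, rfl, rfl⟩ | ⟨u, rfl, rfl⟩
      · exact Or.inl ⟨.brk c u k, by simp [pcomp], by simp [PCtx.plug]⟩
      · refine Or.inr (Or.inr ⟨fun W => .brk c a (u ++ W ++ b'),
          fun Z => .hole (a ++ .node (c.plug Z) :: u) b',
          fun Z W => by simp [PCtx.plug], by simp, by simp⟩)
      · refine Or.inr (Or.inr ⟨fun W => .brk c (a' ++ W ++ u) b,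
          fun Z => .hole a' (u ++ .node (c.plug Z) :: b),
          fun Z W => by simp [PCtx.plug], by simp, by simp⟩)
    | brk d a' b' =>
      simp only [PCtx.plug] at h
      rcases three_split a (PTree.node (c.plug [t])) b a' [.node (d.plug Y)] b' (by simpa using h) with
        ⟨u, k, rfl, hY, rfl⟩ | ⟨u, rfl, rfl⟩ | ⟨u, rfl, rfl⟩
      · obtain ⟨rfl, rfl, hY2⟩ := singleton_eq hY.symm
        injection hY2 with hY3
        rcases ih d t Y hY3 with
          ⟨E, rfl, hE2⟩ | ⟨E, rfl, hE2⟩ | ⟨Cf0, Df0, hid, rfl, rfl⟩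
        · exact Or.inl ⟨E, by simp [pcomp], hE2⟩
        · exact Or.inr (Or.inl ⟨E, by simp [pcomp], hE2⟩)
        · refine Or.inr (Or.inr ⟨fun W => .brk (Cf0 W) (a' ++ []) ([] ++ b'),
            fun Z => .brk (Df0 Z) a' b',
            fun Z W => by simp [PCtx.plug, hid], by simp, by simp⟩)
      · refine Or.inr (Or.inr ⟨fun W => .brk c a (u ++ .node (d.plug W) :: b'),
          fun Z => .brk d (a ++ .node (c.plug Z) :: u) b',
          fun Z W => by simp [PCtx.plug], by simp, by simp⟩)
      · refine Or.inr (Or.inr ⟨fun W => .brk c (a' ++ .node (d.plug W) :: u) b,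
          fun Z => .brk d a' (u ++ .node (c.plug Z) :: b),
          fun Z W => by simp [PCtx.plug], by simp, by simp⟩)

/-- Splitting a plug of a single tree against an append. -/
theorem plug_eq_append (C : PCtx) (t : PTree) (G D' : PHedge) (h : C.plug [t] = G ++ D') :
    (∃ E : PCtx, (∀ Z, C.plug Z = E.plug Z ++ D') ∧ E.plug [t] = G) ∨
    (∃ E : PCtx, (∀ Z, C.plug Z = G ++ E.plug Z) ∧ E.plug [t] = D') := by
  cases C with
  | hole a b =>
    simp only [PCtx.plug] at h
    rcases three_split a t b [] G D' (by simpa using h) with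
      ⟨u, k, hu, rfl, rfl⟩ | ⟨u, hu, rfl⟩ | ⟨u, hu, rfl⟩
    · simp at hu; subst hu
      exact Or.inl ⟨PCtx.hole a k, fun Z => by simp [PCtx.plug], by simp [PCtx.plug]⟩
    · simp at hu
    · simp at hu; subst hu
      exact Or.inr ⟨PCtx.hole u b, fun Z => by simp [PCtx.plug], by simp [PCtx.plug]⟩
  | brk c a b =>
    simp only [PCtx.plug] at h
    rcases three_split a (PTree.node (c.plug [t])) b [] G D' (by simpa using h) with
      ⟨u, k, hu, rfl, rfl⟩ | ⟨u, hu, rfl⟩ | ⟨u, hu, rfl⟩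
    · simp at hu; subst hu
      exact Or.inl ⟨PCtx.brk c a k, fun Z => by simp [PCtx.plug], by simp [PCtx.plug]⟩
    · simp at hu
    · simp at hu; subst hu
      exact Or.inr ⟨PCtx.brk c u b, fun Z => by simp [PCtx.plug], by simp [PCtx.plug]⟩

end BR
namespace BR
open PTy PTree

/-- Cut-free provability. -/
inductive CF : PHedge → PTy → Prop where
  | id (p) : CF [.leaf (.prim p)] (.prim p)
  | ldivL (G : PHedge) (D : PCtx) (A B C) :
      CF G A → CF (D.plug [.leaf B]) C →
      CF (D.plug (G ++ [.leaf (.ldiv A B)])) C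
  | ldivR (Pi : PHedge) (A B) : Pi ≠ [] →
      CF (.leaf A :: Pi) B → CF Pi (.ldiv A B)
  | rdivL (G : PHedge) (D : PCtx) (A B C) :
      CF G A → CF (D.plug [.leaf B]) C →
      CF (D.plug (.leaf (.rdiv B A) :: G)) C
  | rdivR (Pi : PHedge) (A B) : Pi ≠ [] →
      CF (Pi ++ [.leaf A]) B → CF Pi (.rdiv B A)
  | mulL (G : PCtx) (A B C) :
      CF (G.plug [.leaf A, .leaf B]) C → CF (G.plug [.leaf (.mul A B)]) C
  | mulR (G D : PHedge) (A B) :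
      CF G A → CF D B → CF (G ++ D) (.mul A B)
  | diaL (G : PCtx) (A B) :
      CF (G.plug [.node [.leaf A]]) B → CF (G.plug [.leaf (.dia A)]) B
  | diaR (G : PHedge) (A) :
      CF G A → CF [.node G] (.dia A)
  | boxL (G : PCtx) (A B) :
      CF (G.plug [.leaf A]) B → CF (G.plug [.node [.leaf (.box A)]]) B
  | boxR (G : PHedge) (A) :
      CF [.node G] A → CF G (.box A)

/-- Height-indexed cut-free provability. -/
inductive CFN : ℕ → PHedge → PTy → Prop where
  | id (n p) : CFN n [.leaf (.prim p)] (.prim p)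
  | ldivL (n) (G : PHedge) (D : PCtx) (A B C) :
      CFN n G A → CFN n (D.plug [.leaf B]) C →
      CFN (n+1) (D.plug (G ++ [.leaf (.ldiv A B)])) C
  | ldivR (n) (Pi : PHedge) (A B) : Pi ≠ [] →
      CFN n (.leaf A :: Pi) B → CFN (n+1) Pi (.ldiv A B)
  | rdivL (n) (G : PHedge) (D : PCtx) (A B C) :
      CFN n G A → CFN n (D.plug [.leaf B]) C →
      CFN (n+1) (D.plug (.leaf (.rdiv B A) :: G)) C
  | rdivR (n) (Pi : PHedge) (A B) : Pi ≠ [] →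
      CFN n (Pi ++ [.leaf A]) B → CFN (n+1) Pi (.rdiv B A)
  | mulL (n) (G : PCtx) (A B C) :
      CFN n (G.plug [.leaf A, .leaf B]) C → CFN (n+1) (G.plug [.leaf (.mul A B)]) C
  | mulR (n) (G D : PHedge) (A B) :
      CFN n G A → CFN n D B → CFN (n+1) (G ++ D) (.mul A B)
  | diaL (n) (G : PCtx) (A B) :
      CFN n (G.plug [.node [.leaf A]]) B → CFN (n+1) (G.plug [.leaf (.dia A)]) B
  | diaR (n) (G : PHedge) (A) :
      CFN n G A → CFN (n+1) [.node G] (.dia A)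
  | boxL (n) (G : PCtx) (A B) :
      CFN n (G.plug [.leaf A]) B → CFN (n+1) (G.plug [.node [.leaf (.box A)]]) B
  | boxR (n) (G : PHedge) (A) :
      CFN n [.node G] A → CFN (n+1) G (.box A)

theorem CFN.succ : ∀ {n S A}, CFN n S A → CFN (n+1) S A := by
  intro n S A h
  induction h with
  | id => exact .id _ _
  | ldivL n G D A B C h1 h2 ih1 ih2 => exact .ldivL _ _ _ _ _ _ ih1 ih2
  | ldivR n Pi A B hne h ih => exact .ldivR _ _ _ _ hne ih
  | rdivL n G D A B C h1 h2 ih1 ih2 => exact .rdivL _ _ _ _ _ _ ih1 ih2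
  | rdivR n Pi A B hne h ih => exact .rdivR _ _ _ _ hne ih
  | mulL n G A B C h ih => exact .mulL _ _ _ _ _ ih
  | mulR n G D A B h1 h2 ih1 ih2 => exact .mulR _ _ _ _ _ ih1 ih2
  | diaL n G A B h ih => exact .diaL _ _ _ _ ih
  | diaR n G A h ih => exact .diaR _ _ _ ih
  | boxL n G A B h ih => exact .boxL _ _ _ _ ih
  | boxR n G A h ih => exact .boxR _ _ _ ih

theorem CFN.mono : ∀ {n S A}, CFN n S A → ∀ {m}, n ≤ m → CFN m S A := by
  intro n S A h m hm
  induction m, hm using Nat.le_induction with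
  | base => exact h
  | succ m hm ih => exact ih.succ

theorem cf_of_cfn {n S A} (h : CFN n S A) : CF S A := by
  induction h with
  | id => exact .id _
  | ldivL _ _ _ _ _ _ _ _ ih1 ih2 => exact .ldivL _ _ _ _ _ ih1 ih2
  | ldivR _ _ _ _ hne _ ih => exact .ldivR _ _ _ hne ih
  | rdivL _ _ _ _ _ _ _ _ ih1 ih2 => exact .rdivL _ _ _ _ _ ih1 ih2
  | rdivR _ _ _ _ hne _ ih => exact .rdivR _ _ _ hne ih
  | mulL _ _ _ _ _ _ ih => exact .mulL _ _ _ _ ih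
  | mulR _ _ _ _ _ _ _ ih1 ih2 => exact .mulR _ _ _ _ ih1 ih2
  | diaL _ _ _ _ _ ih => exact .diaL _ _ _ ih
  | diaR _ _ _ _ ih => exact .diaR _ _ ih
  | boxL _ _ _ _ _ ih => exact .boxL _ _ _ ih
  | boxR _ _ _ _ ih => exact .boxR _ _ ih

theorem cfn_of_cf {S A} (h : CF S A) : ∃ n, CFN n S A := by
  induction h with
  | id => exact ⟨0, .id 0 _⟩
  | ldivL _ _ _ _ _ _ _ ih1 ih2 =>
    obtain ⟨n1, h1⟩ := ih1; obtain ⟨n2, h2⟩ := ih2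
    exact ⟨max n1 n2 + 1, .ldivL _ _ _ _ _ _ (h1.mono (le_max_left _ _)) (h2.mono (le_max_right _ _))⟩
  | ldivR _ _ _ hne _ ih =>
    obtain ⟨n1, h1⟩ := ih
    exact ⟨n1 + 1, .ldivR _ _ _ _ hne h1⟩
  | rdivL _ _ _ _ _ _ _ ih1 ih2 =>
    obtain ⟨n1, h1⟩ := ih1; obtain ⟨n2, h2⟩ := ih2
    exact ⟨max n1 n2 + 1, .rdivL _ _ _ _ _ _ (h1.mono (le_max_left _ _)) (h2.mono (le_max_right _ _))⟩
  | rdivR _ _ _ hne _ ih =>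
    obtain ⟨n1, h1⟩ := ih
    exact ⟨n1 + 1, .rdivR _ _ _ _ hne h1⟩
  | mulL _ _ _ _ _ ih =>
    obtain ⟨n1, h1⟩ := ih
    exact ⟨n1 + 1, .mulL _ _ _ _ _ h1⟩
  | mulR _ _ _ _ _ _ ih1 ih2 =>
    obtain ⟨n1, h1⟩ := ih1; obtain ⟨n2, h2⟩ := ih2
    exact ⟨max n1 n2 + 1, .mulR _ _ _ _ _ (h1.mono (le_max_left _ _)) (h2.mono (le_max_right _ _))⟩
  | diaL _ _ _ _ ih =>
    obtain ⟨n1, h1⟩ := ih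
    exact ⟨n1 + 1, .diaL _ _ _ _ h1⟩
  | diaR _ _ _ ih =>
    obtain ⟨n1, h1⟩ := ih
    exact ⟨n1 + 1, .diaR _ _ _ h1⟩
  | boxL _ _ _ _ ih =>
    obtain ⟨n1, h1⟩ := ih
    exact ⟨n1 + 1, .boxL _ _ _ _ h1⟩
  | boxR _ _ _ ih =>
    obtain ⟨n1, h1⟩ := ih
    exact ⟨n1 + 1, .boxR _ _ _ h1⟩

theorem prov_of_cf {S A} (h : CF S A) : PProv S A := by
  induction h with
  | id => exact .id _
  | ldivL _ _ _ _ _ _ _ ih1 ih2 => exact .ldivL _ _ _ _ _ ih1 ih2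
  | ldivR _ _ _ hne _ ih => exact .ldivR _ _ _ hne ih
  | rdivL _ _ _ _ _ _ _ ih1 ih2 => exact .rdivL _ _ _ _ _ ih1 ih2
  | rdivR _ _ _ hne _ ih => exact .rdivR _ _ _ hne ih
  | mulL _ _ _ _ _ ih => exact .mulL _ _ _ _ ih
  | mulR _ _ _ _ _ _ ih1 ih2 => exact .mulR _ _ _ _ ih1 ih2
  | diaL _ _ _ _ ih => exact .diaL _ _ _ ih
  | diaR _ _ _ ih => exact .diaR _ _ ih
  | boxL _ _ _ _ ih => exact .boxL _ _ _ ih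
  | boxR _ _ _ ih => exact .boxR _ _ ih

/-- The generalized identity axiom, cut-free. -/
theorem CF.ax (A : PTy) : CF [.leaf A] A := by
  induction A with
  | prim p => exact .id p
  | ldiv A B ihA ihB =>
    refine CF.ldivR _ _ _ (by simp) ?_
    have := CF.ldivL [.leaf A] (.hole [] []) A B B ihA ihB
    simpa [PCtx.plug] using this
  | rdiv B A ihB ihA =>
    refine CF.rdivR _ _ _ (by simp) ?_
    have := CF.rdivL [.leaf A] (.hole [] []) A B B ihA ihB
    simpa [PCtx.plug] using this
  | mul A B ihA ihB =>
    have h2 := CF.mulR [.leaf A] [.leaf B] A B ihA ihB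
    have := CF.mulL (.hole [] []) A B (.mul A B) (by simpa [PCtx.plug] using h2)
    simpa [PCtx.plug] using this
  | dia A ih =>
    have h2 := CF.diaR [.leaf A] A ih
    have := CF.diaL (.hole [] []) A (.dia A) (by simpa [PCtx.plug] using h2)
    simpa [PCtx.plug] using this
  | box A ih =>
    have h1 := CF.boxL (.hole [] []) A A (by simpa [PCtx.plug] using ih)
    refine CF.boxR _ _ ?_
    simpa [PCtx.plug] using h1

end BR
namespace BR
open PTy PTree

mutual
/-- Every bracket node has a nonempty yield. -/
def goodT : PTree → Prop
  | .leaf _ => True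
  | .node ts => yieldHedge ts ≠ [] ∧ goodH ts
def goodH : PHedge → Prop
  | [] => True
  | t :: ts => goodT t ∧ goodH ts
end

theorem goodH_append : ∀ (a b : PHedge), goodH (a ++ b) ↔ goodH a ∧ goodH b := by
  intro a b
  induction a with
  | nil => simp [goodH]
  | cons t ts ih => simp [goodH, ih]; tauto

theorem good_plug_elim : ∀ (C : PCtx) (X : PHedge), goodH (C.plug X) → goodH X := by
  intro C
  induction C with
  | hole p q => intro X h; simp only [PCtx.plug, goodH_append] at h; exact h.1.2
  | brk c p q ih =>
    intro X h
    simp only [PCtx.plug, goodH_append, goodH, goodT] at h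
    exact ih X h.2.1.2

theorem good_plug_intro : ∀ (C : PCtx) (X Y : PHedge), goodH (C.plug X) → goodH Y →
    yieldHedge Y ≠ [] → goodH (C.plug Y) := by
  intro C
  induction C with
  | hole p q =>
    intro X Y h hY _
    simp only [PCtx.plug, goodH_append] at h ⊢
    exact ⟨⟨h.1.1, hY⟩, h.2⟩
  | brk c p q ih =>
    intro X Y h hY hYne
    simp only [PCtx.plug, goodH_append, goodH, goodT] at h ⊢
    refine ⟨h.1, ⟨⟨?_, ih X Y h.2.1.2 hY hYne⟩, h.2.2⟩⟩
    rw [yield_plug]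
    simp [hYne]

theorem yield_plug_ne (C : PCtx) (X : PHedge) (hX : yieldHedge X ≠ []) :
    yieldHedge (C.plug X) ≠ [] := by
  rw [yield_plug]; simp [hX]

/-- In cut-free provable sequents the antecedent has nonempty yield and all
bracket nodes have nonempty yields. -/
theorem cf_good {S A} (h : CF S A) : yieldHedge S ≠ [] ∧ goodH S := by
  induction h with
  | id => simp [yieldHedge, yieldTree, goodH, goodT]
  | ldivL G D A B C h1 h2 ih1 ih2 =>
    constructor
    · apply yield_plug_ne; simp [yieldHedge_append, yieldHedge, yieldTree]
    · refine good_plug_intro _ _ _ ih2.2 ?_ ?_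
      · rw [goodH_append]; exact ⟨ih1.2, by simp [goodH, goodT]⟩
      · simp [yieldHedge_append, yieldHedge, yieldTree]
  | ldivR Pi A B hne h ih =>
    obtain ⟨ihne, ihg⟩ := ih
    have hg : goodH Pi := by
      have h' : goodT (.leaf A) ∧ goodH Pi := by simpa [goodH] using ihg
      exact h'.2
    refine ⟨?_, hg⟩
    cases Pi with
    | nil => exact absurd rfl hne
    | cons t ts =>
      cases t with
      | leaf T => simp [yieldHedge, yieldTree]
      | node us =>
        have h2 : goodT (.node us) ∧ goodH ts := by simpa [goodH] using hg
        have h3 := h2.1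
        simp only [goodT] at h3
        simp [yieldHedge, yieldTree]
        intro hc _; exact h3.1 hc
  | rdivL G D A B C h1 h2 ih1 ih2 =>
    constructor
    · apply yield_plug_ne; simp [yieldHedge_append, yieldHedge, yieldTree]
    · refine good_plug_intro _ _ _ ih2.2 ?_ ?_
      · simp only [goodH, goodT, true_and]; exact ih1.2
      · simp [yieldHedge_append, yieldHedge, yieldTree]
  | rdivR Pi A B hne h ih =>
    obtain ⟨ihne, ihg⟩ := ih
    have hg : goodH Pi := ((goodH_append _ _).1 ihg).1
    refine ⟨?_, hg⟩
    cases Pi with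
    | nil => exact absurd rfl hne
    | cons t ts =>
      cases t with
      | leaf T => simp [yieldHedge, yieldTree]
      | node us =>
        have h2 : goodT (.node us) ∧ goodH ts := by simpa [goodH] using hg
        have h3 := h2.1
        simp only [goodT] at h3
        simp [yieldHedge, yieldTree]
        intro hc _; exact h3.1 hc
  | mulL G A B C h ih =>
    constructor
    · apply yield_plug_ne; simp [yieldHedge, yieldTree]
    · refine good_plug_intro _ _ _ ih.2 (by simp [goodH, goodT]) (by simp [yieldHedge, yieldTree])
  | mulR G D A B h1 h2 ih1 ih2 =>
    constructor
    · simp [yieldHedge_append]; intro hc; exact absurd hc ih1.1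
    · rw [goodH_append]; exact ⟨ih1.2, ih2.2⟩
  | diaL G A B h ih =>
    constructor
    · apply yield_plug_ne; simp [yieldHedge, yieldTree]
    · exact good_plug_intro _ _ _ ih.2 (by simp [goodH, goodT]) (by simp [yieldHedge, yieldTree])
  | diaR G A h ih =>
    refine ⟨by simpa [yieldHedge, yieldTree] using ih.1, ?_⟩
    simp [goodH, goodT]
    exact ⟨ih.1, ih.2⟩
  | boxL G A B h ih =>
    constructor
    · apply yield_plug_ne; simp [yieldHedge, yieldTree]
    · exact good_plug_intro _ _ _ ih.2
        (by simp [goodH, goodT, yieldHedge, yieldTree]) (by simp [yieldHedge, yieldTree])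
  | boxR G A h ih =>
    obtain ⟨ihne, ihg⟩ := ih
    have h2 : goodT (.node G) := by simpa [goodH] using ihg
    simp only [goodT] at h2
    exact ⟨h2.1, h2.2⟩

theorem cf_ne_nil {S A} (h : CF S A) : S ≠ [] := by
  intro hc; subst hc
  exact (cf_good h).1 (by simp [yieldHedge])

end BR
namespace BR
open PTy PTree

theorem CF.ldivL_c (E D1 : PCtx) {G A B C} (h1 : CF G A)
    (h2 : CF (E.plug (D1.plug [.leaf B])) C) :
    CF (E.plug (D1.plug (G ++ [.leaf (.ldiv A B)]))) C := by
  rw [← plug_comp] at h2 ⊢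
  exact CF.ldivL _ _ _ _ _ h1 h2

theorem CF.rdivL_c (E D1 : PCtx) {G A B C} (h1 : CF G A)
    (h2 : CF (E.plug (D1.plug [.leaf B])) C) :
    CF (E.plug (D1.plug (.leaf (.rdiv B A) :: G))) C := by
  rw [← plug_comp] at h2 ⊢
  exact CF.rdivL _ _ _ _ _ h1 h2

theorem CF.mulL_c (E D1 : PCtx) {A B C} (h : CF (E.plug (D1.plug [.leaf A, .leaf B])) C) :
    CF (E.plug (D1.plug [.leaf (.mul A B)])) C := by
  rw [← plug_comp] at h ⊢
  exact CF.mulL _ _ _ _ h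

theorem CF.diaL_c (E D1 : PCtx) {A B} (h : CF (E.plug (D1.plug [.node [.leaf A]])) B) :
    CF (E.plug (D1.plug [.leaf (.dia A)])) B := by
  rw [← plug_comp] at h ⊢
  exact CF.diaL _ _ _ h

theorem CF.boxL_c (E D1 : PCtx) {A B} (h : CF (E.plug (D1.plug [.leaf A])) B) :
    CF (E.plug (D1.plug [.node [.leaf (.box A)]])) B := by
  rw [← plug_comp] at h ⊢
  exact CF.boxL _ _ _ h

section Principal

variable {A0 B0 C0 : PTy} {G G0 : PHedge} {Ectx D0 : PCtx} {n : ℕ}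

theorem prin_ldiv
    (hE : ∀ X, Ectx.plug X = D0.plug (G0 ++ X))
    (IHk : ∀ A', lenP A' < lenP (PTy.ldiv A0 B0) → ∀ (G' : PHedge) (D' : PCtx) (B' : PTy),
        CF G' A' → CF (D'.plug [.leaf A']) B' → CF (D'.plug G') B')
    (IHs : ∀ n' (G' : PHedge), n' < n → CFN n' G' (.ldiv A0 B0) → CF (Ectx.plug G') C0)
    (hl : CFN n G (.ldiv A0 B0)) (h1 : CF G0 A0) (h2 : CF (D0.plug [.leaf B0]) C0) :
    CF (Ectx.plug G) C0 := by
  cases hl with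
  | ldivR n' Pi' A' B' hne p =>
    have c1 : CF (G0 ++ G) B0 := by
      have := IHk A0 (by have := lenP_pos B0; simp [lenP]; omega) G0 (.hole [] G) B0 h1
        (by simpa [PCtx.plug] using cf_of_cfn p)
      simpa [PCtx.plug] using this
    have c2 := IHk B0 (by have := lenP_pos A0; simp [lenP]; omega) (G0 ++ G) D0 C0 c1 h2
    rw [hE]; exact c2
  | ldivL n' G1 D1 A1 B1 C1 p1 p2 =>
    exact CF.ldivL_c Ectx D1 (cf_of_cfn p1) (IHs n' _ (by omega) p2)
  | rdivL n' G1 D1 A1 B1 C1 p1 p2 =>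
    exact CF.rdivL_c Ectx D1 (cf_of_cfn p1) (IHs n' _ (by omega) p2)
  | mulL n' D1 A1 B1 C1 p => exact CF.mulL_c Ectx D1 (IHs n' _ (by omega) p)
  | diaL n' D1 A1 B1 p => exact CF.diaL_c Ectx D1 (IHs n' _ (by omega) p)
  | boxL n' D1 A1 B1 p => exact CF.boxL_c Ectx D1 (IHs n' _ (by omega) p)

theorem prin_rdiv
    (hE : ∀ X, Ectx.plug X = D0.plug (X ++ G0))
    (IHk : ∀ A', lenP A' < lenP (PTy.rdiv B0 A0) → ∀ (G' : PHedge) (D' : PCtx) (B' : PTy),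
        CF G' A' → CF (D'.plug [.leaf A']) B' → CF (D'.plug G') B')
    (IHs : ∀ n' (G' : PHedge), n' < n → CFN n' G' (.rdiv B0 A0) → CF (Ectx.plug G') C0)
    (hl : CFN n G (.rdiv B0 A0)) (h1 : CF G0 A0) (h2 : CF (D0.plug [.leaf B0]) C0) :
    CF (Ectx.plug G) C0 := by
  cases hl with
  | rdivR n' Pi' A' B' hne p =>
    have c1 : CF (G ++ G0) B0 := by
      have := IHk A0 (by have := lenP_pos B0; simp [lenP]; omega) G0 (.hole G []) B0 h1
        (by simpa [PCtx.plug] using cf_of_cfn p)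
      simpa [PCtx.plug] using this
    have c2 := IHk B0 (by have := lenP_pos A0; simp [lenP]; omega) (G ++ G0) D0 C0 c1 h2
    rw [hE]; exact c2
  | ldivL n' G1 D1 A1 B1 C1 p1 p2 =>
    exact CF.ldivL_c Ectx D1 (cf_of_cfn p1) (IHs n' _ (by omega) p2)
  | rdivL n' G1 D1 A1 B1 C1 p1 p2 =>
    exact CF.rdivL_c Ectx D1 (cf_of_cfn p1) (IHs n' _ (by omega) p2)
  | mulL n' D1 A1 B1 C1 p => exact CF.mulL_c Ectx D1 (IHs n' _ (by omega) p)
  | diaL n' D1 A1 B1 p => exact CF.diaL_c Ectx D1 (IHs n' _ (by omega) p)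
  | boxL n' D1 A1 B1 p => exact CF.boxL_c Ectx D1 (IHs n' _ (by omega) p)

theorem prin_mul
    (hE : ∀ X, Ectx.plug X = D0.plug X)
    (IHk : ∀ A', lenP A' < lenP (PTy.mul A0 B0) → ∀ (G' : PHedge) (D' : PCtx) (B' : PTy),
        CF G' A' → CF (D'.plug [.leaf A']) B' → CF (D'.plug G') B')
    (IHs : ∀ n' (G' : PHedge), n' < n → CFN n' G' (.mul A0 B0) → CF (Ectx.plug G') C0)
    (hl : CFN n G (.mul A0 B0)) (h2 : CF (D0.plug [.leaf A0, .leaf B0]) C0) :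
    CF (Ectx.plug G) C0 := by
  cases hl with
  | mulR n' G1 G2 A' B' p1 p2 =>
    have c1 : CF (D0.plug (G1 ++ [.leaf B0])) C0 := by
      have := IHk A0 (by have := lenP_pos B0; simp [lenP]; omega) G1
        (pcomp D0 (.hole [] [.leaf B0])) C0 (cf_of_cfn p1)
        (by rw [plug_comp]; simpa [PCtx.plug] using h2)
      rw [plug_comp] at this
      simpa [PCtx.plug] using this
    have c2 : CF (D0.plug (G1 ++ G2)) C0 := by
      have := IHk B0 (by have := lenP_pos A0; simp [lenP]; omega) G2
        (pcomp D0 (.hole G1 [])) C0 (cf_of_cfn p2)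
        (by rw [plug_comp]; simpa [PCtx.plug] using c1)
      rw [plug_comp] at this
      simpa [PCtx.plug] using this
    rw [hE]; exact c2
  | ldivL n' G1 D1 A1 B1 C1 p1 p2 =>
    exact CF.ldivL_c Ectx D1 (cf_of_cfn p1) (IHs n' _ (by omega) p2)
  | rdivL n' G1 D1 A1 B1 C1 p1 p2 =>
    exact CF.rdivL_c Ectx D1 (cf_of_cfn p1) (IHs n' _ (by omega) p2)
  | mulL n' D1 A1 B1 C1 p => exact CF.mulL_c Ectx D1 (IHs n' _ (by omega) p)
  | diaL n' D1 A1 B1 p => exact CF.diaL_c Ectx D1 (IHs n' _ (by omega) p)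
  | boxL n' D1 A1 B1 p => exact CF.boxL_c Ectx D1 (IHs n' _ (by omega) p)

theorem prin_dia
    (hE : ∀ X, Ectx.plug X = D0.plug X)
    (IHk : ∀ A', lenP A' < lenP (PTy.dia A0) → ∀ (G' : PHedge) (D' : PCtx) (B' : PTy),
        CF G' A' → CF (D'.plug [.leaf A']) B' → CF (D'.plug G') B')
    (IHs : ∀ n' (G' : PHedge), n' < n → CFN n' G' (.dia A0) → CF (Ectx.plug G') C0)
    (hl : CFN n G (.dia A0)) (h2 : CF (D0.plug [.node [.leaf A0]]) C0) :
    CF (Ectx.plug G) C0 := by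
  cases hl with
  | diaR n' G' A' p =>
    have c1 : CF (D0.plug [.node G']) C0 := by
      have := IHk A0 (by simp [lenP]) G'
        (pcomp D0 (.brk (.hole [] []) [] [])) C0 (cf_of_cfn p)
        (by rw [plug_comp]; simpa [PCtx.plug] using h2)
      rw [plug_comp] at this
      simpa [PCtx.plug] using this
    rw [hE]; exact c1
  | ldivL n' G1 D1 A1 B1 C1 p1 p2 =>
    exact CF.ldivL_c Ectx D1 (cf_of_cfn p1) (IHs n' _ (by omega) p2)
  | rdivL n' G1 D1 A1 B1 C1 p1 p2 =>
    exact CF.rdivL_c Ectx D1 (cf_of_cfn p1) (IHs n' _ (by omega) p2)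
  | mulL n' D1 A1 B1 C1 p => exact CF.mulL_c Ectx D1 (IHs n' _ (by omega) p)
  | diaL n' D1 A1 B1 p => exact CF.diaL_c Ectx D1 (IHs n' _ (by omega) p)
  | boxL n' D1 A1 B1 p => exact CF.boxL_c Ectx D1 (IHs n' _ (by omega) p)

theorem prin_box
    (hE : ∀ X, Ectx.plug X = D0.plug [.node X])
    (IHk : ∀ A', lenP A' < lenP (PTy.box A0) → ∀ (G' : PHedge) (D' : PCtx) (B' : PTy),
        CF G' A' → CF (D'.plug [.leaf A']) B' → CF (D'.plug G') B')
    (IHs : ∀ n' (G' : PHedge), n' < n → CFN n' G' (.box A0) → CF (Ectx.plug G') C0)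
    (hl : CFN n G (.box A0)) (h2 : CF (D0.plug [.leaf A0]) C0) :
    CF (Ectx.plug G) C0 := by
  cases hl with
  | boxR n' G' A' p =>
    have c1 : CF (D0.plug [.node G]) C0 :=
      IHk A0 (by simp [lenP]) [.node G] D0 C0 (cf_of_cfn p) h2
    rw [hE]; exact c1
  | ldivL n' G1 D1 A1 B1 C1 p1 p2 =>
    exact CF.ldivL_c Ectx D1 (cf_of_cfn p1) (IHs n' _ (by omega) p2)
  | rdivL n' G1 D1 A1 B1 C1 p1 p2 =>
    exact CF.rdivL_c Ectx D1 (cf_of_cfn p1) (IHs n' _ (by omega) p2)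
  | mulL n' D1 A1 B1 C1 p => exact CF.mulL_c Ectx D1 (IHs n' _ (by omega) p)
  | diaL n' D1 A1 B1 p => exact CF.diaL_c Ectx D1 (IHs n' _ (by omega) p)
  | boxL n' D1 A1 B1 p => exact CF.boxL_c Ectx D1 (IHs n' _ (by omega) p)

end Principal

end BR
namespace BR
open PTy PTree

theorem cutN : ∀ (k s : ℕ) (A : PTy) (n m : ℕ) (G : PHedge) (D : PCtx) (B : PTy),
    lenP A ≤ k → n + m ≤ s → CFN n G A → CFN m (D.plug [.leaf A]) B → CF (D.plug G) B := by
  intro k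
  induction k using Nat.strong_induction_on with
  | _ k IHk0 =>
  intro s
  induction s using Nat.strong_induction_on with
  | _ s IHs0 =>
  intro A n m G D B hk hs hl hr
  have hr0 := hr
  have IHk : ∀ A', lenP A' < lenP A → ∀ (G' : PHedge) (D' : PCtx) (B' : PTy),
      CF G' A' → CF (D'.plug [.leaf A']) B' → CF (D'.plug G') B' := by
    intro A' hA' G' D' B' hg hd
    obtain ⟨n1, hg1⟩ := cfn_of_cf hg
    obtain ⟨m1, hd1⟩ := cfn_of_cf hd
    exact IHk0 (lenP A') (by omega) (n1 + m1) A' n1 m1 G' D' B' le_rfl le_rfl hg1 hd1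
  have IHs : ∀ n' m' (G' : PHedge) (D' : PCtx) (B' : PTy), n' + m' < n + m →
      CFN n' G' A → CFN m' (D'.plug [.leaf A]) B' → CF (D'.plug G') B' := by
    intro n' m' G' D' B' hlt h1 h2
    exact IHs0 (n' + m') (by omega) A n' m' G' D' B' hk le_rfl h1 h2
  clear IHk0 IHs0
  obtain ⟨S, hS, hr⟩ : ∃ S, D.plug [.leaf A] = S ∧ CFN m S B := ⟨_, rfl, hr⟩
  cases hr with
  | id mm pp =>
    rcases plug_single_eq_single _ _ _ hS with ⟨rfl, heq⟩ | ⟨c, rfl, heq⟩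
    · injection heq with h'
      subst h'
      simpa [PCtx.plug] using cf_of_cfn hl
    · exact absurd heq (by simp)
  | ldivR mm Pi' A0 B0 hne p =>
    subst hS
    have p' : CFN mm ((pcomp (.hole [.leaf A0] []) D).plug [.leaf A]) B0 := by
      rw [plug_comp]; simpa [PCtx.plug] using p
    have c := IHs n mm G _ B0 (by omega) hl p'
    rw [plug_comp] at c
    simp only [PCtx.plug, List.nil_append, List.singleton_append] at c
    exact CF.ldivR _ _ _ (plug_ne_nil D G (cf_ne_nil (cf_of_cfn hl))) (by simpa using c)
  | rdivR mm Pi' A0 B0 hne p =>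
    subst hS
    have p' : CFN mm ((pcomp (.hole [] [.leaf A0]) D).plug [.leaf A]) B0 := by
      rw [plug_comp]; simpa [PCtx.plug] using p
    have c := IHs n mm G _ B0 (by omega) hl p'
    rw [plug_comp] at c
    simp only [PCtx.plug, List.nil_append, List.append_nil] at c
    exact CF.rdivR _ _ _ (plug_ne_nil D G (cf_ne_nil (cf_of_cfn hl))) (by simpa using c)
  | mulR mm G1 G2 A0 B0 p1 p2 =>
    rcases plug_eq_append D (.leaf A) G1 G2 hS with ⟨E, hEz, hE1⟩ | ⟨E, hEz, hE1⟩
    · have c := IHs n mm G E A0 (by omega) hl (by rw [hE1]; exact p1)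
      rw [hEz G]
      exact CF.mulR _ _ _ _ c (cf_of_cfn p2)
    · have c := IHs n mm G E B0 (by omega) hl (by rw [hE1]; exact p2)
      rw [hEz G]
      exact CF.mulR _ _ _ _ (cf_of_cfn p1) c
  | diaR mm G0 A0 p =>
    rcases plug_single_eq_single _ _ _ hS with ⟨rfl, heq⟩ | ⟨c, rfl, heq⟩
    · exact absurd heq (by simp)
    · injection heq with h'
      have c1 := IHs n mm G c A0 (by omega) hl (by rw [← h']; exact p)
      simpa [PCtx.plug] using CF.diaR _ _ c1
  | boxR mm G0 A0 p =>
    subst hS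
    have p' : CFN mm ((pcomp (.brk (.hole [] []) [] []) D).plug [.leaf A]) A0 := by
      rw [plug_comp]; simpa [PCtx.plug] using p
    have c := IHs n mm G _ A0 (by omega) hl p'
    rw [plug_comp] at c
    simp only [PCtx.plug, List.nil_append, List.append_nil] at c
    exact CF.boxR _ _ c
  | ldivL mm G0 D0 A0 B0 C0 p1 p2 =>
    rcases overlap D D0 (.leaf A) _ hS with ⟨E, rfl, hE⟩ | ⟨E, rfl, hE⟩ | ⟨Cf, Df, hid, hCf, hDf⟩
    · rcases plug_eq_append E (.leaf A) G0 [.leaf (.ldiv A0 B0)] hE with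
        ⟨E', hEz, hE1⟩ | ⟨E2, hEz, hE2⟩
      · have c := IHs n mm G E' A0 (by omega) hl (by rw [hE1]; exact p1)
        rw [plug_comp, hEz G]
        exact CF.ldivL _ _ _ _ _ c (cf_of_cfn p2)
      · rcases plug_single_eq_single _ _ _ hE2 with ⟨rfl, heq⟩ | ⟨c, rfl, heq⟩
        · injection heq with h'
          subst h'
          refine prin_ldiv (D0 := D0) (G0 := G0) ?_ IHk ?_ hl (cf_of_cfn p1) (cf_of_cfn p2)
          · intro X; rw [plug_comp, hEz X]; simp [PCtx.plug]
          · intro n' G' hlt h'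
            exact IHs n' (mm+1) G' _ B (by omega) h' hr0
        · exact absurd heq (by simp)
    · cases E with
      | hole a b =>
        simp only [PCtx.plug] at hE
        obtain ⟨hag, rfl, heq⟩ := singleton_eq (u := a ++ G0) (k := b) (by simpa using hE)
        obtain ⟨rfl, rfl⟩ := List.append_eq_nil_iff.mp hag
        injection heq with h'
        subst h'
        rw [pcomp_hole] at p2
        refine prin_ldiv (D0 := D) (G0 := []) ?_ IHk ?_ hl (cf_of_cfn p1) (cf_of_cfn p2)
        · intro X; simp
        · intro n' G' hlt h'
          exact IHs n' (mm+1) G' _ B (by omega) h' hr0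
      | brk e a b =>
        simp only [PCtx.plug] at hE
        obtain ⟨_, _, heq⟩ := singleton_eq hE
        exact absurd heq (by simp)
    · subst hCf; subst hDf
      have p2' : CFN mm ((Cf [.leaf B0]).plug [.leaf A]) B := by rw [hid]; exact p2
      have c := IHs n mm G _ B (by omega) hl p2'
      rw [hid] at c
      have c2 := CF.ldivL G0 (Df G) A0 B0 B (cf_of_cfn p1) c
      rw [← hid] at c2
      exact c2
  | rdivL mm G0 D0 A0 B0 C0 p1 p2 =>
    rcases overlap D D0 (.leaf A) _ hS with ⟨E, rfl, hE⟩ | ⟨E, rfl, hE⟩ | ⟨Cf, Df, hid, hCf, hDf⟩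
    · rcases plug_eq_append E (.leaf A) [.leaf (.rdiv B0 A0)] G0 (by simpa using hE) with
        ⟨E', hEz, hE1⟩ | ⟨E2, hEz, hE2⟩
      · rcases plug_single_eq_single _ _ _ hE1 with ⟨rfl, heq⟩ | ⟨c, rfl, heq⟩
        · injection heq with h'
          subst h'
          refine prin_rdiv (D0 := D0) (G0 := G0) ?_ IHk ?_ hl (cf_of_cfn p1) (cf_of_cfn p2)
          · intro X; rw [plug_comp, hEz X]; simp [PCtx.plug]
          · intro n' G' hlt h'
            exact IHs n' (mm+1) G' _ B (by omega) h' hr0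
        · exact absurd heq (by simp)
      · have c := IHs n mm G E2 A0 (by omega) hl (by rw [hE2]; exact p1)
        rw [plug_comp, hEz G]
        exact CF.rdivL _ _ _ _ _ c (cf_of_cfn p2)
    · cases E with
      | hole a b =>
        simp only [PCtx.plug] at hE
        obtain ⟨rfl, hgb, heq⟩ := singleton_eq (u := a) (k := G0 ++ b) (by simpa using hE)
        obtain ⟨rfl, rfl⟩ := List.append_eq_nil_iff.mp hgb
        injection heq with h'
        subst h'
        rw [pcomp_hole] at p2
        refine prin_rdiv (D0 := D) (G0 := []) ?_ IHk ?_ hl (cf_of_cfn p1) (cf_of_cfn p2)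
        · intro X; simp
        · intro n' G' hlt h'
          exact IHs n' (mm+1) G' _ B (by omega) h' hr0
      | brk e a b =>
        simp only [PCtx.plug] at hE
        obtain ⟨_, _, heq⟩ := singleton_eq hE
        exact absurd heq (by simp)
    · subst hCf; subst hDf
      have p2' : CFN mm ((Cf [.leaf B0]).plug [.leaf A]) B := by rw [hid]; exact p2
      have c := IHs n mm G _ B (by omega) hl p2'
      rw [hid] at c
      have c2 := CF.rdivL G0 (Df G) A0 B0 B (cf_of_cfn p1) c
      rw [← hid] at c2
      exact c2
  | mulL mm D0 A0 B0 C0 p =>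
    rcases overlap D D0 (.leaf A) _ hS with ⟨E, rfl, hE⟩ | ⟨E, rfl, hE⟩ | ⟨Cf, Df, hid, hCf, hDf⟩
    · rcases plug_single_eq_single _ _ _ hE with ⟨rfl, heq⟩ | ⟨c, rfl, heq⟩
      · injection heq with h'
        subst h'
        rw [pcomp_hole]
        rw [pcomp_hole] at hr0
        refine prin_mul (D0 := D0) (fun _ => rfl) IHk ?_ hl (cf_of_cfn p)
        intro n' G' hlt h'
        exact IHs n' (mm+1) G' _ B (by omega) h' hr0
      · exact absurd heq (by simp)
    · cases E with
      | hole a b =>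
        simp only [PCtx.plug] at hE
        obtain ⟨rfl, rfl, heq⟩ := singleton_eq (by simpa using hE)
        injection heq with h'
        subst h'
        rw [pcomp_hole] at p
        refine prin_mul (D0 := D) (fun _ => rfl) IHk ?_ hl (cf_of_cfn p)
        intro n' G' hlt h'
        exact IHs n' (mm+1) G' _ B (by omega) h' hr0
      | brk e a b =>
        simp only [PCtx.plug] at hE
        obtain ⟨_, _, heq⟩ := singleton_eq hE
        exact absurd heq (by simp)
    · subst hCf; subst hDf
      have p' : CFN mm ((Cf [.leaf A0, .leaf B0]).plug [.leaf A]) B := by rw [hid]; exact p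
      have c := IHs n mm G _ B (by omega) hl p'
      rw [hid] at c
      have c2 := CF.mulL (Df G) A0 B0 B c
      rw [← hid] at c2
      exact c2
  | diaL mm D0 A0 B0 p =>
    rcases overlap D D0 (.leaf A) _ hS with ⟨E, rfl, hE⟩ | ⟨E, rfl, hE⟩ | ⟨Cf, Df, hid, hCf, hDf⟩
    · rcases plug_single_eq_single _ _ _ hE with ⟨rfl, heq⟩ | ⟨c, rfl, heq⟩
      · injection heq with h'
        subst h'
        rw [pcomp_hole]
        rw [pcomp_hole] at hr0
        refine prin_dia (D0 := D0) (fun _ => rfl) IHk ?_ hl (cf_of_cfn p)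
        intro n' G' hlt h'
        exact IHs n' (mm+1) G' _ B (by omega) h' hr0
      · exact absurd heq (by simp)
    · cases E with
      | hole a b =>
        simp only [PCtx.plug] at hE
        obtain ⟨rfl, rfl, heq⟩ := singleton_eq (by simpa using hE)
        injection heq with h'
        subst h'
        rw [pcomp_hole] at p
        refine prin_dia (D0 := D) (fun _ => rfl) IHk ?_ hl (cf_of_cfn p)
        intro n' G' hlt h'
        exact IHs n' (mm+1) G' _ B (by omega) h' hr0
      | brk e a b =>
        simp only [PCtx.plug] at hE
        obtain ⟨_, _, heq⟩ := singleton_eq hE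
        exact absurd heq (by simp)
    · subst hCf; subst hDf
      have p' : CFN mm ((Cf [.node [.leaf A0]]).plug [.leaf A]) B := by rw [hid]; exact p
      have c := IHs n mm G _ B (by omega) hl p'
      rw [hid] at c
      have c2 := CF.diaL (Df G) A0 B c
      rw [← hid] at c2
      exact c2
  | boxL mm D0 A0 B0 p =>
    rcases overlap D D0 (.leaf A) _ hS with ⟨E, rfl, hE⟩ | ⟨E, rfl, hE⟩ | ⟨Cf, Df, hid, hCf, hDf⟩
    · rcases plug_single_eq_single _ _ _ hE with ⟨rfl, heq⟩ | ⟨c, rfl, heq⟩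
      · exact absurd heq (by simp)
      · injection heq with h'
        rcases plug_single_eq_single c (.leaf A) (.leaf (.box A0)) h'.symm with
          ⟨rfl, heq2⟩ | ⟨c2, rfl, heq2⟩
        · injection heq2 with h2
          subst h2
          refine prin_box (D0 := D0) ?_ IHk ?_ hl (cf_of_cfn p)
          · intro X; rw [plug_comp]; simp [PCtx.plug]
          · intro n' G' hlt h'2
            exact IHs n' (mm+1) G' _ B (by omega) h'2 hr0
        · exact absurd heq2 (by simp)
    · cases E with
      | hole a b =>
        simp only [PCtx.plug] at hE
        obtain ⟨_, _, heq⟩ := singleton_eq (by simpa using hE)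
        exact absurd heq (by simp)
      | brk e a b =>
        simp only [PCtx.plug] at hE
        obtain ⟨_, _, heq⟩ := singleton_eq hE
        exact absurd heq (by simp)
    · subst hCf; subst hDf
      have p' : CFN mm ((Cf [.leaf A0]).plug [.leaf A]) B := by rw [hid]; exact p
      have c := IHs n mm G _ B (by omega) hl p'
      rw [hid] at c
      have c2 := CF.boxL (Df G) A0 B c
      rw [← hid] at c2
      exact c2

theorem cut_admissible {G A} {D : PCtx} {B} (h1 : CF G A) (h2 : CF (D.plug [.leaf A]) B) :
    CF (D.plug G) B := by
  obtain ⟨n, h1'⟩ := cfn_of_cf h1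
  obtain ⟨m, h2'⟩ := cfn_of_cf h2
  exact cutN (lenP A) (n + m) A n m G D B le_rfl le_rfl h1' h2'

theorem cf_of_prov {S A} (h : PProv S A) : CF S A := by
  induction h with
  | id => exact .id _
  | ldivL _ _ _ _ _ _ _ ih1 ih2 => exact .ldivL _ _ _ _ _ ih1 ih2
  | ldivR _ _ _ hne _ ih => exact .ldivR _ _ _ hne ih
  | rdivL _ _ _ _ _ _ _ ih1 ih2 => exact .rdivL _ _ _ _ _ ih1 ih2
  | rdivR _ _ _ hne _ ih => exact .rdivR _ _ _ hne ih
  | mulL _ _ _ _ _ ih => exact .mulL _ _ _ _ ih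
  | mulR _ _ _ _ _ _ ih1 ih2 => exact .mulR _ _ _ _ ih1 ih2
  | diaL _ _ _ _ ih => exact .diaL _ _ _ ih
  | diaR _ _ _ ih => exact .diaR _ _ ih
  | boxL _ _ _ _ ih => exact .boxL _ _ _ ih
  | boxR _ _ _ ih => exact .boxR _ _ ih
  | cut _ _ _ _ _ _ ih1 ih2 => exact cut_admissible ih1 ih2

end BR
namespace BR
open PTy PTree

def Pred (Bs : Finset ℕ) (m : ℕ) (T : PTy) : Prop := PTy.over Bs T ∧ lenP T ≤ m

variable {Bs : Finset ℕ} {m : ℕ}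

theorem Pred_ldiv {A B} (h : Pred Bs m (.ldiv A B)) : Pred Bs m A ∧ Pred Bs m B := by
  obtain ⟨ho, hl⟩ := h
  simp only [PTy.over] at ho
  have := lenP_pos A; have := lenP_pos B
  simp only [lenP] at hl
  exact ⟨⟨ho.1, by omega⟩, ⟨ho.2, by omega⟩⟩

theorem Pred_rdiv {A B} (h : Pred Bs m (.rdiv B A)) : Pred Bs m A ∧ Pred Bs m B := by
  obtain ⟨ho, hl⟩ := h
  simp only [PTy.over] at ho
  have := lenP_pos A; have := lenP_pos B
  simp only [lenP] at hl
  exact ⟨⟨ho.2, by omega⟩, ⟨ho.1, by omega⟩⟩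

theorem Pred_mul {A B} (h : Pred Bs m (.mul A B)) : Pred Bs m A ∧ Pred Bs m B := by
  obtain ⟨ho, hl⟩ := h
  simp only [PTy.over] at ho
  have := lenP_pos A; have := lenP_pos B
  simp only [lenP] at hl
  exact ⟨⟨ho.1, by omega⟩, ⟨ho.2, by omega⟩⟩

theorem Pred_dia {A} (h : Pred Bs m (.dia A)) : Pred Bs m A := by
  obtain ⟨ho, hl⟩ := h
  simp only [PTy.over] at ho
  simp only [lenP] at hl
  exact ⟨ho, by omega⟩

theorem Pred_box {A} (h : Pred Bs m (.box A)) : Pred Bs m A := by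
  obtain ⟨ho, hl⟩ := h
  simp only [PTy.over] at ho
  simp only [lenP] at hl
  exact ⟨ho, by omega⟩

end BR
namespace BR
open PTy PTree

theorem hall_ctx {Bs : Finset ℕ} {m : ℕ} {D : PCtx} {M M' : PHedge} {C : PTy}
    (hall : ∀ T ∈ yieldHedge (D.plug M) ++ [C], Pred Bs m T)
    (hM : ∀ T ∈ yieldHedge M', T ∈ yieldHedge M ∨ Pred Bs m T) :
    ∀ T ∈ yieldHedge (D.plug M') ++ [C], Pred Bs m T := by
  intro T hT
  rw [yield_plug] at hT
  simp only [List.mem_append, List.mem_singleton] at hT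
  rcases hT with ((h | h) | h) | h
  · exact hall _ (by rw [yield_plug]; simp only [List.mem_append]; tauto)
  · rcases hM T h with h2 | h2
    · exact hall _ (by rw [yield_plug]; simp only [List.mem_append]; tauto)
    · exact h2
  · exact hall _ (by rw [yield_plug]; simp only [List.mem_append]; tauto)
  · subst h; exact hall _ (by simp)

theorem bred {Bs : Finset ℕ} {m : ℕ} {S Cc} (h : CF S Cc) :
    ∀ (Γ : PCtx) (Δ : PHedge), S = Γ.plug [.node Δ] →
    (∀ T ∈ yieldHedge S ++ [Cc], Pred Bs m T) →
    ∃ E : PTy, PTy.over Bs E ∧ lenP E ≤ m - 2 ∧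
      ((CF Δ E ∧ CF (Γ.plug [.leaf (.dia E)]) Cc) ∨
       (CF Δ (.box E) ∧ CF (Γ.plug [.leaf E]) Cc)) := by
  induction h with
  | id p =>
    intro Γ Δ hS hall
    rcases plug_single_eq_single Γ _ _ hS.symm with ⟨rfl, heq⟩ | ⟨c, rfl, heq⟩ <;>
      exact absurd heq (by simp)
  | ldivR Pi A0 B0 hne p ih =>
    intro Γ Δ hS hall
    subst hS
    have hCc : Pred Bs m (.ldiv A0 B0) := hall _ (by simp)
    have hrw : PTree.leaf A0 :: Γ.plug [.node Δ] =
        (pcomp (.hole [.leaf A0] []) Γ).plug [.node Δ] := by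
      rw [plug_comp]; simp [PCtx.plug]
    have hall' : ∀ T ∈ yieldHedge (PTree.leaf A0 :: Γ.plug [.node Δ]) ++ [B0], Pred Bs m T := by
      intro T hT
      simp only [yieldHedge, yieldTree, List.mem_append, List.mem_cons, List.mem_singleton,
        List.not_mem_nil, or_false, false_or, List.singleton_append] at hT
      rcases hT with (h | h) | h
      · subst h; exact (Pred_ldiv hCc).1
      · exact hall _ (by simp only [List.mem_append]; tauto)
      · subst h; exact (Pred_ldiv hCc).2
    rcases ih _ _ hrw hall' with ⟨E, ho, hl, ⟨d1, d2⟩ | ⟨d1, d2⟩⟩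
    · rw [plug_comp] at d2
      simp only [PCtx.plug, List.nil_append, List.singleton_append] at d2
      exact ⟨E, ho, hl, Or.inl ⟨d1, CF.ldivR _ _ _ (plug_single_ne_nil _ _) (by simpa using d2)⟩⟩
    · rw [plug_comp] at d2
      simp only [PCtx.plug, List.nil_append, List.singleton_append] at d2
      exact ⟨E, ho, hl, Or.inr ⟨d1, CF.ldivR _ _ _ (plug_single_ne_nil _ _) (by simpa using d2)⟩⟩
  | rdivR Pi A0 B0 hne p ih =>
    intro Γ Δ hS hall
    subst hS
    have hCc : Pred Bs m (.rdiv B0 A0) := hall _ (by simp)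
    have hrw : Γ.plug [.node Δ] ++ [PTree.leaf A0] =
        (pcomp (.hole [] [.leaf A0]) Γ).plug [.node Δ] := by
      rw [plug_comp]; simp [PCtx.plug]
    have hall' : ∀ T ∈ yieldHedge (Γ.plug [.node Δ] ++ [PTree.leaf A0]) ++ [B0], Pred Bs m T := by
      intro T hT
      simp only [yieldHedge_append, yieldHedge, yieldTree, List.mem_append, List.mem_cons,
        List.mem_singleton, List.not_mem_nil, or_false, false_or, List.append_nil] at hT
      rcases hT with (h | h) | h
      · exact hall _ (by simp only [List.mem_append]; tauto)
      · subst h; exact (Pred_rdiv hCc).1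
      · subst h; exact (Pred_rdiv hCc).2
    rcases ih _ _ hrw hall' with ⟨E, ho, hl, ⟨d1, d2⟩ | ⟨d1, d2⟩⟩
    · rw [plug_comp] at d2
      simp only [PCtx.plug, List.nil_append, List.append_nil] at d2
      exact ⟨E, ho, hl, Or.inl ⟨d1, CF.rdivR _ _ _ (plug_single_ne_nil _ _) (by simpa using d2)⟩⟩
    · rw [plug_comp] at d2
      simp only [PCtx.plug, List.nil_append, List.append_nil] at d2
      exact ⟨E, ho, hl, Or.inr ⟨d1, CF.rdivR _ _ _ (plug_single_ne_nil _ _) (by simpa using d2)⟩⟩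
  | mulR G1 G2 A0 B0 p1 p2 ih1 ih2 =>
    intro Γ Δ hS hall
    have hCc : Pred Bs m (.mul A0 B0) := hall _ (by simp)
    rcases plug_eq_append Γ (.node Δ) G1 G2 hS.symm with ⟨E, hEz, hE1⟩ | ⟨E, hEz, hE1⟩
    · have hall' : ∀ T ∈ yieldHedge G1 ++ [A0], Pred Bs m T := by
        intro T hT
        simp only [List.mem_append, List.mem_singleton] at hT
        rcases hT with h | h
        · exact hall _ (by simp only [← hS, yieldHedge_append, List.mem_append]; tauto)
        · subst h; exact (Pred_mul hCc).1
      rcases ih1 _ _ hE1.symm hall' with ⟨E0, ho, hl, ⟨d1, d2⟩ | ⟨d1, d2⟩⟩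
      · exact ⟨E0, ho, hl, Or.inl ⟨d1, by rw [hEz]; exact CF.mulR _ _ _ _ d2 p2⟩⟩
      · exact ⟨E0, ho, hl, Or.inr ⟨d1, by rw [hEz]; exact CF.mulR _ _ _ _ d2 p2⟩⟩
    · have hall' : ∀ T ∈ yieldHedge G2 ++ [B0], Pred Bs m T := by
        intro T hT
        simp only [List.mem_append, List.mem_singleton] at hT
        rcases hT with h | h
        · exact hall _ (by simp only [← hS, yieldHedge_append, List.mem_append]; tauto)
        · subst h; exact (Pred_mul hCc).2
      rcases ih2 _ _ hE1.symm hall' with ⟨E0, ho, hl, ⟨d1, d2⟩ | ⟨d1, d2⟩⟩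
      · exact ⟨E0, ho, hl, Or.inl ⟨d1, by rw [hEz]; exact CF.mulR _ _ _ _ p1 d2⟩⟩
      · exact ⟨E0, ho, hl, Or.inr ⟨d1, by rw [hEz]; exact CF.mulR _ _ _ _ p1 d2⟩⟩
  | diaR G0 A0 p ih =>
    intro Γ Δ hS hall
    have hCc : Pred Bs m (.dia A0) := hall _ (by simp)
    rcases plug_single_eq_single Γ _ _ hS.symm with ⟨rfl, heq⟩ | ⟨c, rfl, heq⟩
    · injection heq with h'
      subst h'
      obtain ⟨ho, hl⟩ := hCc
      simp only [PTy.over] at ho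
      simp only [lenP] at hl
      refine ⟨A0, ho, by omega, Or.inl ⟨p, ?_⟩⟩
      simpa [PCtx.plug] using CF.ax (PTy.dia A0)
    · injection heq with h'
      have hall' : ∀ T ∈ yieldHedge G0 ++ [A0], Pred Bs m T := by
        intro T hT
        simp only [List.mem_append, List.mem_singleton] at hT
        rcases hT with h | h
        · exact hall _ (by simp only [yieldHedge, yieldTree, List.append_nil, List.mem_append]; tauto)
        · subst h; exact Pred_dia hCc
      rcases ih _ _ h' hall' with ⟨E0, ho, hl, ⟨d1, d2⟩ | ⟨d1, d2⟩⟩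
      · exact ⟨E0, ho, hl, Or.inl ⟨d1, by simpa [PCtx.plug] using CF.diaR _ _ d2⟩⟩
      · exact ⟨E0, ho, hl, Or.inr ⟨d1, by simpa [PCtx.plug] using CF.diaR _ _ d2⟩⟩
  | boxR G0 A0 p ih =>
    intro Γ Δ hS hall
    subst hS
    have hCc : Pred Bs m (.box A0) := hall _ (by simp)
    have hrw : [PTree.node (Γ.plug [.node Δ])] =
        (pcomp (.brk (.hole [] []) [] []) Γ).plug [.node Δ] := by
      rw [plug_comp]; simp [PCtx.plug]
    have hall' : ∀ T ∈ yieldHedge [PTree.node (Γ.plug [.node Δ])] ++ [A0], Pred Bs m T := by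
      intro T hT
      simp only [yieldHedge, yieldTree, List.append_nil, List.mem_append,
        List.mem_singleton] at hT
      rcases hT with h | h
      · exact hall _ (by simp only [List.mem_append]; tauto)
      · subst h; exact Pred_box hCc
    rcases ih _ _ hrw hall' with ⟨E0, ho, hl, ⟨d1, d2⟩ | ⟨d1, d2⟩⟩
    · rw [plug_comp] at d2
      simp only [PCtx.plug, List.nil_append, List.append_nil] at d2
      exact ⟨E0, ho, hl, Or.inl ⟨d1, CF.boxR _ _ d2⟩⟩
    · rw [plug_comp] at d2
      simp only [PCtx.plug, List.nil_append, List.append_nil] at d2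
      exact ⟨E0, ho, hl, Or.inr ⟨d1, CF.boxR _ _ d2⟩⟩
  | ldivL G0 R A0 B0 C0 p1 p2 ih1 ih2 =>
    intro Γ Δ hS hall
    have hldiv : Pred Bs m (.ldiv A0 B0) := hall _ (by
      rw [yield_plug]
      simp [yieldHedge_append, yieldHedge, yieldTree])
    rcases overlap Γ R (.node Δ) _ hS.symm with ⟨E, rfl, hE⟩ | ⟨E, rfl, hE⟩ | ⟨Cf, Df, hid, hCf, hDf⟩
    · rcases plug_eq_append E (.node Δ) G0 [.leaf (.ldiv A0 B0)] hE with
        ⟨E', hEz, hE1⟩ | ⟨E2, hEz, hE2⟩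
      · have hall1 : ∀ T ∈ yieldHedge G0 ++ [A0], Pred Bs m T := by
          intro T hT
          simp only [List.mem_append, List.mem_singleton] at hT
          rcases hT with h | h
          · exact hall _ (by
              rw [yield_plug]
              simp only [yieldHedge_append, List.mem_append]; tauto)
          · subst h; exact (Pred_ldiv hldiv).1
        rcases ih1 _ _ hE1.symm hall1 with ⟨E0, ho, hl, ⟨d1, d2⟩ | ⟨d1, d2⟩⟩
        · refine ⟨E0, ho, hl, Or.inl ⟨d1, ?_⟩⟩
          rw [plug_comp, hEz]
          exact CF.ldivL _ _ _ _ _ d2 p2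
        · refine ⟨E0, ho, hl, Or.inr ⟨d1, ?_⟩⟩
          rw [plug_comp, hEz]
          exact CF.ldivL _ _ _ _ _ d2 p2
      · rcases plug_single_eq_single _ _ _ hE2 with ⟨rfl, heq⟩ | ⟨c, rfl, heq⟩ <;>
          exact absurd heq (by simp)
    · cases E with
      | hole a b =>
        simp only [PCtx.plug] at hE
        obtain ⟨_, _, heq⟩ := singleton_eq (u := a ++ G0) (k := b) (by simpa using hE)
        exact absurd heq (by simp)
      | brk e a b =>
        simp only [PCtx.plug] at hE
        obtain ⟨rfl, rfl, heq⟩ := singleton_eq hE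
        injection heq with h'
        subst h'
        have hrwX : ∀ X, (pcomp Γ (.brk e [] [])).plug X = Γ.plug [.node (e.plug X)] := by
          intro X; rw [plug_comp]; simp [PCtx.plug]
        rw [plug_comp] at p2
        simp only [PCtx.plug, List.nil_append, List.append_nil] at p2
        have hall2 : ∀ T ∈ yieldHedge ((pcomp Γ (.brk e [] [])).plug [.leaf B0]) ++ [C0],
            Pred Bs m T := by
          refine hall_ctx (M := G0 ++ [.leaf (.ldiv A0 B0)]) hall ?_
          intro T hT
          simp only [yieldHedge, yieldTree, List.append_nil, List.mem_singleton] at hT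
          subst hT
          exact Or.inr (Pred_ldiv hldiv).2
        rcases ih2 Γ (e.plug [.leaf B0]) (hrwX _) hall2 with
          ⟨E0, ho, hl, ⟨d1, d2⟩ | ⟨d1, d2⟩⟩
        · exact ⟨E0, ho, hl, Or.inl ⟨CF.ldivL G0 e A0 B0 E0 p1 d1, d2⟩⟩
        · exact ⟨E0, ho, hl, Or.inr ⟨CF.ldivL G0 e A0 B0 (.box E0) p1 d1, d2⟩⟩
    · subst hCf; subst hDf
      have hall3 : ∀ T ∈ yieldHedge ((Df [.node Δ]).plug [.leaf B0]) ++ [C0], Pred Bs m T := by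
        refine hall_ctx (M := G0 ++ [.leaf (.ldiv A0 B0)]) hall ?_
        intro T hT
        simp only [yieldHedge, yieldTree, List.append_nil, List.mem_singleton] at hT
        subst hT
        exact Or.inr (Pred_ldiv hldiv).2
      rcases ih2 (Cf [.leaf B0]) Δ (hid _ _).symm hall3 with ⟨E0, ho, hl, ⟨d1, d2⟩ | ⟨d1, d2⟩⟩
      · refine ⟨E0, ho, hl, Or.inl ⟨d1, ?_⟩⟩
        rw [hid] at d2
        have c2 := CF.ldivL G0 (Df [.leaf (.dia E0)]) A0 B0 C0 p1 d2
        rw [← hid] at c2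
        exact c2
      · refine ⟨E0, ho, hl, Or.inr ⟨d1, ?_⟩⟩
        rw [hid] at d2
        have c2 := CF.ldivL G0 (Df [.leaf E0]) A0 B0 C0 p1 d2
        rw [← hid] at c2
        exact c2
  | rdivL G0 R A0 B0 C0 p1 p2 ih1 ih2 =>
    intro Γ Δ hS hall
    have hrdiv : Pred Bs m (.rdiv B0 A0) := hall _ (by
      rw [yield_plug]
      simp [yieldHedge_append, yieldHedge, yieldTree])
    rcases overlap Γ R (.node Δ) _ hS.symm with ⟨E, rfl, hE⟩ | ⟨E, rfl, hE⟩ | ⟨Cf, Df, hid, hCf, hDf⟩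
    · rcases plug_eq_append E (.node Δ) [.leaf (.rdiv B0 A0)] G0 (by simpa using hE) with
        ⟨E', hEz, hE1⟩ | ⟨E2, hEz, hE2⟩
      · rcases plug_single_eq_single _ _ _ hE1 with ⟨rfl, heq⟩ | ⟨c, rfl, heq⟩ <;>
          exact absurd heq (by simp)
      · have hall1 : ∀ T ∈ yieldHedge G0 ++ [A0], Pred Bs m T := by
          intro T hT
          simp only [List.mem_append, List.mem_singleton] at hT
          rcases hT with h | h
          · exact hall _ (by
              rw [yield_plug]
              simp only [yieldHedge_append, yieldHedge, yieldTree, List.mem_append,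
                List.mem_cons]; tauto)
          · subst h; exact (Pred_rdiv hrdiv).1
        rcases ih1 _ _ hE2.symm hall1 with ⟨E0, ho, hl, ⟨d1, d2⟩ | ⟨d1, d2⟩⟩
        · refine ⟨E0, ho, hl, Or.inl ⟨d1, ?_⟩⟩
          rw [plug_comp, hEz]
          exact CF.rdivL _ _ _ _ _ d2 p2
        · refine ⟨E0, ho, hl, Or.inr ⟨d1, ?_⟩⟩
          rw [plug_comp, hEz]
          exact CF.rdivL _ _ _ _ _ d2 p2
    · cases E with
      | hole a b =>
        simp only [PCtx.plug] at hE
        obtain ⟨_, _, heq⟩ := singleton_eq (u := a) (k := G0 ++ b) (by simpa using hE)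
        exact absurd heq (by simp)
      | brk e a b =>
        simp only [PCtx.plug] at hE
        obtain ⟨rfl, rfl, heq⟩ := singleton_eq hE
        injection heq with h'
        subst h'
        have hrwX : ∀ X, (pcomp Γ (.brk e [] [])).plug X = Γ.plug [.node (e.plug X)] := by
          intro X; rw [plug_comp]; simp [PCtx.plug]
        have hall2 : ∀ T ∈ yieldHedge ((pcomp Γ (.brk e [] [])).plug [.leaf B0]) ++ [C0],
            Pred Bs m T := by
          refine hall_ctx (M := .leaf (.rdiv B0 A0) :: G0) hall ?_
          intro T hT
          simp only [yieldHedge, yieldTree, List.append_nil, List.mem_singleton] at hT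
          subst hT
          exact Or.inr (Pred_rdiv hrdiv).2
        rcases ih2 Γ (e.plug [.leaf B0]) (hrwX _) hall2 with
          ⟨E0, ho, hl, ⟨d1, d2⟩ | ⟨d1, d2⟩⟩
        · exact ⟨E0, ho, hl, Or.inl ⟨CF.rdivL G0 e A0 B0 E0 p1 d1, d2⟩⟩
        · exact ⟨E0, ho, hl, Or.inr ⟨CF.rdivL G0 e A0 B0 (.box E0) p1 d1, d2⟩⟩
    · subst hCf; subst hDf
      have hall3 : ∀ T ∈ yieldHedge ((Df [.node Δ]).plug [.leaf B0]) ++ [C0], Pred Bs m T := by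
        refine hall_ctx (M := .leaf (.rdiv B0 A0) :: G0) hall ?_
        intro T hT
        simp only [yieldHedge, yieldTree, List.append_nil, List.mem_singleton] at hT
        subst hT
        exact Or.inr (Pred_rdiv hrdiv).2
      rcases ih2 (Cf [.leaf B0]) Δ (hid _ _).symm hall3 with ⟨E0, ho, hl, ⟨d1, d2⟩ | ⟨d1, d2⟩⟩
      · refine ⟨E0, ho, hl, Or.inl ⟨d1, ?_⟩⟩
        rw [hid] at d2
        have c2 := CF.rdivL G0 (Df [.leaf (.dia E0)]) A0 B0 C0 p1 d2
        rw [← hid] at c2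
        exact c2
      · refine ⟨E0, ho, hl, Or.inr ⟨d1, ?_⟩⟩
        rw [hid] at d2
        have c2 := CF.rdivL G0 (Df [.leaf E0]) A0 B0 C0 p1 d2
        rw [← hid] at c2
        exact c2
  | mulL R A0 B0 C0 p ih =>
    intro Γ Δ hS hall
    have hmul : Pred Bs m (.mul A0 B0) := hall _ (by
      rw [yield_plug]
      simp [yieldHedge, yieldTree])
    rcases overlap Γ R (.node Δ) _ hS.symm with ⟨E, rfl, hE⟩ | ⟨E, rfl, hE⟩ | ⟨Cf, Df, hid, hCf, hDf⟩
    · rcases plug_single_eq_single _ _ _ hE with ⟨rfl, heq⟩ | ⟨c, rfl, heq⟩ <;>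
        exact absurd heq (by simp)
    · cases E with
      | hole a b =>
        simp only [PCtx.plug] at hE
        obtain ⟨_, _, heq⟩ := singleton_eq (by simpa using hE)
        exact absurd heq (by simp)
      | brk e a b =>
        simp only [PCtx.plug] at hE
        obtain ⟨rfl, rfl, heq⟩ := singleton_eq hE
        injection heq with h'
        subst h'
        have hrwX : ∀ X, (pcomp Γ (.brk e [] [])).plug X = Γ.plug [.node (e.plug X)] := by
          intro X; rw [plug_comp]; simp [PCtx.plug]
        have hall2 : ∀ T ∈ yieldHedge ((pcomp Γ (.brk e [] [])).plug [.leaf A0, .leaf B0]) ++ [C0],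
            Pred Bs m T := by
          refine hall_ctx (M := [.leaf (.mul A0 B0)]) hall ?_
          intro T hT
          simp [yieldHedge, yieldTree] at hT
          rcases hT with rfl | rfl
          · exact Or.inr (Pred_mul hmul).1
          · exact Or.inr (Pred_mul hmul).2
        rcases ih Γ (e.plug [.leaf A0, .leaf B0]) (hrwX _) hall2 with
          ⟨E0, ho, hl, ⟨d1, d2⟩ | ⟨d1, d2⟩⟩
        · exact ⟨E0, ho, hl, Or.inl ⟨CF.mulL e A0 B0 E0 d1, d2⟩⟩
        · exact ⟨E0, ho, hl, Or.inr ⟨CF.mulL e A0 B0 (.box E0) d1, d2⟩⟩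
    · subst hCf; subst hDf
      have hall3 : ∀ T ∈ yieldHedge ((Df [.node Δ]).plug [.leaf A0, .leaf B0]) ++ [C0],
          Pred Bs m T := by
        refine hall_ctx (M := [.leaf (.mul A0 B0)]) hall ?_
        intro T hT
        simp [yieldHedge, yieldTree] at hT
        rcases hT with rfl | rfl
        · exact Or.inr (Pred_mul hmul).1
        · exact Or.inr (Pred_mul hmul).2
      rcases ih (Cf [.leaf A0, .leaf B0]) Δ (hid _ _).symm hall3 with
        ⟨E0, ho, hl, ⟨d1, d2⟩ | ⟨d1, d2⟩⟩
      · refine ⟨E0, ho, hl, Or.inl ⟨d1, ?_⟩⟩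
        rw [hid] at d2
        have c2 := CF.mulL (Df [.leaf (.dia E0)]) A0 B0 C0 d2
        rw [← hid] at c2
        exact c2
      · refine ⟨E0, ho, hl, Or.inr ⟨d1, ?_⟩⟩
        rw [hid] at d2
        have c2 := CF.mulL (Df [.leaf E0]) A0 B0 C0 d2
        rw [← hid] at c2
        exact c2
  | diaL R A0 B0 p ih =>
    intro Γ Δ hS hall
    have hdia : Pred Bs m (.dia A0) := hall _ (by
      rw [yield_plug]
      simp [yieldHedge, yieldTree])
    rcases overlap Γ R (.node Δ) _ hS.symm with ⟨E, rfl, hE⟩ | ⟨E, rfl, hE⟩ | ⟨Cf, Df, hid, hCf, hDf⟩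
    · rcases plug_single_eq_single _ _ _ hE with ⟨rfl, heq⟩ | ⟨c, rfl, heq⟩ <;>
        exact absurd heq (by simp)
    · cases E with
      | hole a b =>
        simp only [PCtx.plug] at hE
        obtain ⟨_, _, heq⟩ := singleton_eq (by simpa using hE)
        exact absurd heq (by simp)
      | brk e a b =>
        simp only [PCtx.plug] at hE
        obtain ⟨rfl, rfl, heq⟩ := singleton_eq hE
        injection heq with h'
        subst h'
        have hrwX : ∀ X, (pcomp Γ (.brk e [] [])).plug X = Γ.plug [.node (e.plug X)] := by
          intro X; rw [plug_comp]; simp [PCtx.plug]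
        have hall2 : ∀ T ∈ yieldHedge ((pcomp Γ (.brk e [] [])).plug [.node [.leaf A0]]) ++ [B0],
            Pred Bs m T := by
          refine hall_ctx (M := [.leaf (.dia A0)]) hall ?_
          intro T hT
          simp only [yieldHedge, yieldTree, List.append_nil, List.mem_singleton] at hT
          subst hT
          exact Or.inr (Pred_dia hdia)
        rcases ih Γ (e.plug [.node [.leaf A0]]) (hrwX _) hall2 with
          ⟨E0, ho, hl, ⟨d1, d2⟩ | ⟨d1, d2⟩⟩
        · exact ⟨E0, ho, hl, Or.inl ⟨CF.diaL e A0 E0 d1, d2⟩⟩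
        · exact ⟨E0, ho, hl, Or.inr ⟨CF.diaL e A0 (.box E0) d1, d2⟩⟩
    · subst hCf; subst hDf
      have hall3 : ∀ T ∈ yieldHedge ((Df [.node Δ]).plug [.node [.leaf A0]]) ++ [B0],
          Pred Bs m T := by
        refine hall_ctx (M := [.leaf (.dia A0)]) hall ?_
        intro T hT
        simp only [yieldHedge, yieldTree, List.append_nil, List.mem_singleton] at hT
        subst hT
        exact Or.inr (Pred_dia hdia)
      rcases ih (Cf [.node [.leaf A0]]) Δ (hid _ _).symm hall3 with
        ⟨E0, ho, hl, ⟨d1, d2⟩ | ⟨d1, d2⟩⟩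
      · refine ⟨E0, ho, hl, Or.inl ⟨d1, ?_⟩⟩
        rw [hid] at d2
        have c2 := CF.diaL (Df [.leaf (.dia E0)]) A0 B0 d2
        rw [← hid] at c2
        exact c2
      · refine ⟨E0, ho, hl, Or.inr ⟨d1, ?_⟩⟩
        rw [hid] at d2
        have c2 := CF.diaL (Df [.leaf E0]) A0 B0 d2
        rw [← hid] at c2
        exact c2
  | boxL R A0 B0 p ih =>
    intro Γ Δ hS hall
    have hbox : Pred Bs m (.box A0) := hall _ (by
      rw [yield_plug]
      simp [yieldHedge, yieldTree])
    rcases overlap Γ R (.node Δ) _ hS.symm with ⟨E, rfl, hE⟩ | ⟨E, rfl, hE⟩ | ⟨Cf, Df, hid, hCf, hDf⟩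
    · rcases plug_single_eq_single _ _ _ hE with ⟨rfl, heq⟩ | ⟨c, rfl, heq⟩
      · injection heq with h'
        subst h'
        obtain ⟨ho, hl⟩ := hbox
        simp only [PTy.over] at ho
        simp only [lenP] at hl
        refine ⟨A0, ho, by omega, Or.inr ⟨CF.ax (.box A0), ?_⟩⟩
        rw [pcomp_hole]
        exact p
      · injection heq with h'
        rcases plug_single_eq_single c (.node Δ) (.leaf (.box A0)) h'.symm with
          ⟨rfl, heq2⟩ | ⟨c2, rfl, heq2⟩ <;> exact absurd heq2 (by simp)
    · cases E with
      | hole a b =>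
        simp only [PCtx.plug] at hE
        obtain ⟨rfl, rfl, heq⟩ := singleton_eq (by simpa using hE)
        injection heq with h'
        subst h'
        rw [pcomp_hole] at p
        obtain ⟨ho, hl⟩ := hbox
        simp only [PTy.over] at ho
        simp only [lenP] at hl
        exact ⟨A0, ho, by omega, Or.inr ⟨CF.ax (.box A0), p⟩⟩
      | brk e a b =>
        simp only [PCtx.plug] at hE
        obtain ⟨rfl, rfl, heq⟩ := singleton_eq hE
        injection heq with h'
        subst h'
        have hrwX : ∀ X, (pcomp Γ (.brk e [] [])).plug X = Γ.plug [.node (e.plug X)] := by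
          intro X; rw [plug_comp]; simp [PCtx.plug]
        have hall2 : ∀ T ∈ yieldHedge ((pcomp Γ (.brk e [] [])).plug [.leaf A0]) ++ [B0],
            Pred Bs m T := by
          refine hall_ctx (M := [.node [.leaf (.box A0)]]) hall ?_
          intro T hT
          simp only [yieldHedge, yieldTree, List.append_nil, List.mem_singleton] at hT
          subst hT
          exact Or.inr (Pred_box hbox)
        rcases ih Γ (e.plug [.leaf A0]) (hrwX _) hall2 with
          ⟨E0, ho, hl, ⟨d1, d2⟩ | ⟨d1, d2⟩⟩
        · exact ⟨E0, ho, hl, Or.inl ⟨CF.boxL e A0 E0 d1, d2⟩⟩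
        · exact ⟨E0, ho, hl, Or.inr ⟨CF.boxL e A0 (.box E0) d1, d2⟩⟩
    · subst hCf; subst hDf
      have hall3 : ∀ T ∈ yieldHedge ((Df [.node Δ]).plug [.leaf A0]) ++ [B0],
          Pred Bs m T := by
        refine hall_ctx (M := [.node [.leaf (.box A0)]]) hall ?_
        intro T hT
        simp only [yieldHedge, yieldTree, List.append_nil, List.mem_singleton] at hT
        subst hT
        exact Or.inr (Pred_box hbox)
      rcases ih (Cf [.leaf A0]) Δ (hid _ _).symm hall3 with
        ⟨E0, ho, hl, ⟨d1, d2⟩ | ⟨d1, d2⟩⟩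
      · refine ⟨E0, ho, hl, Or.inl ⟨d1, ?_⟩⟩
        rw [hid] at d2
        have c2 := CF.boxL (Df [.leaf (.dia E0)]) A0 B0 d2
        rw [← hid] at c2
        exact c2
      · refine ⟨E0, ho, hl, Or.inr ⟨d1, ?_⟩⟩
        rw [hid] at d2
        have c2 := CF.boxL (Df [.leaf E0]) A0 B0 d2
        rw [← hid] at c2
        exact c2

end BR
/-- Bracket-reduction lemma for L◇. -/
theorem bracket_reduction (B : Finset ℕ) (m : ℕ) (G : PCtx) (D : PHedge) (C : PTy)
    (h : PProv (G.plug [.node D]) C)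
    (hall : ∀ A ∈ yieldHedge (G.plug [.node D]) ++ [C], PTy.over B A ∧ lenP A ≤ m) :
    ∃ E : PTy, PTy.over B E ∧ lenP E ≤ m - 2 ∧
      ((PProv D E ∧ PProv (G.plug [.leaf (.dia E)]) C) ∨
       (PProv D (.box E) ∧ PProv (G.plug [.leaf E]) C)) := by
  have hcf := BR.cf_of_prov h
  have hall' : ∀ T ∈ yieldHedge (G.plug [.node D]) ++ [C], BR.Pred B m T := fun T hT => hall T hT
  rcases BR.bred hcf G D rfl hall' with ⟨E, ho, hl, ⟨d1, d2⟩ | ⟨d1, d2⟩⟩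
  · exact ⟨E, ho, hl, Or.inl ⟨BR.prov_of_cf d1, BR.prov_of_cf d2⟩⟩
  · exact ⟨E, ho, hl, Or.inr ⟨BR.prov_of_cf d1, BR.prov_of_cf d2⟩⟩
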